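/- arXiv:1704.03956 — 3 statements merged into one kernel-verified Lean document; each statement's English description precedes it below -/
import Mathlib

section
/- Let (X_{i,w})_{i≥1} and (X_{i,v})_{i≥1} be {0,1}-valued random variables such that whenever indices i, l, m are pairwise distinct, X_{i,w}, X_{l,v}, X_{m,v} are independent, with E[X_{i,w}] = μ_w and E[X_{i,v}] = μ_v for all i. Define Y_{j,v} = (1/j)∑_{l=1}^j X_{l,v}. Then for i ≤ j ≤ k, E[X_{i,w} · Y_{j,v} · Y_{k,v}] ≤ ((jk − 2j − k + 2)·μ_w·μ_v² + 2j + k − 2)/(jk). -/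
/-!
Expanding both running averages writes `E[X_{i,w} Y_{j,v} Y_{k,v}]` as `1/(jk)` times the sum of
`E[X_{i,w} X_{l,v} X_{m,v}]` over the `jk` pairs `(l, m) ∈ [1, j] × [1, k]`. A pair with `i, l, m`
pairwise distinct contributes exactly `μ_w μ_v²`; there are `(j - 1)(k - 2)` of them since `i ≤ j ≤ k`.
Every other pair contributes at most `1` because the variables are `{0,1}`-valued.
-/

open MeasureTheory Finset

theorem Finset.sum_le_card_filter_nsmul_add_card_filter_not_nsmul {α R : Type*}
    [AddCommMonoid R] [PartialOrder R] [IsOrderedAddMonoid R]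
    {s : Finset α} {f : α → R} (p : α → Prop) [DecidablePred p] {c b : R}
    (h_eq : ∀ x ∈ s, p x → f x = c) (h_le : ∀ x ∈ s, ¬p x → f x ≤ b) :
    ∑ x ∈ s, f x ≤ #(s.filter p) • c + #(s.filter (¬p ·)) • b := by
  rw [← sum_filter_add_sum_filter_not s p]
  gcongr
  · rw [sum_congr rfl fun x hx => h_eq x (mem_filter.1 hx).1 (mem_filter.1 hx).2, sum_const]
  · exact sum_le_card_nsmul _ _ _ fun x hx => h_le x (mem_filter.1 hx).1 (mem_filter.1 hx).2

theorem Finset.cast_card_filter_product_pairwise_ne {α R : Type*} [DecidableEq α] [Ring R]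
    {s t : Finset α} {i : α} (hi : i ∈ s) (hst : s ⊆ t) :
    (#((s ×ˢ t).filter fun p => i ≠ p.1 ∧ p.1 ≠ p.2 ∧ p.2 ≠ i) : R) =
      (#s - 1) * (#t - 2) := by
  have fiber : ∀ l ∈ s.erase i,
      (#(t.filter fun m => i ≠ l ∧ l ≠ m ∧ m ≠ i) : R) = #t - 2 := by
    intro l hl
    obtain ⟨hli, hl⟩ := mem_erase.1 hl
    rw [show t.filter (fun m => i ≠ l ∧ l ≠ m ∧ m ≠ i) = (t.erase l).erase i by
          ext m; simp [hli.symm]; tauto,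
      cast_card_erase_of_mem (mem_erase.2 ⟨hli.symm, hst hi⟩), cast_card_erase_of_mem (hst hl),
      sub_sub, one_add_one_eq_two]
  rw [card_filter, sum_product, ← add_sum_erase s _ hi]
  simp only [← card_filter]
  push_cast
  rw [sum_congr rfl fiber]
  simp [cast_card_erase_of_mem hi, mul_sub]

theorem integral_mul_scaled_sum_mul_scaled_sum {Ω ι : Type*} [MeasurableSpace Ω] {μ : Measure Ω}
    (X : Ω → ℝ) (Y : ι → Ω → ℝ) (s t : Finset ι) (a b : ℝ)
    (hint : ∀ l m, Integrable (fun ω => X ω * (Y l ω * Y m ω)) μ) :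
    ∫ ω, X ω * ((a * ∑ l ∈ s, Y l ω) * (b * ∑ m ∈ t, Y m ω)) ∂μ =
      a * b * ∑ p ∈ s ×ˢ t, ∫ ω, X ω * (Y p.1 ω * Y p.2 ω) ∂μ := by
  have expand : ∀ ω, X ω * ((a * ∑ l ∈ s, Y l ω) * (b * ∑ m ∈ t, Y m ω)) =
      a * b * ∑ p ∈ s ×ˢ t, X ω * (Y p.1 ω * Y p.2 ω) := fun ω => by
    simp only [sum_product, mul_sum, sum_mul]
    rw [sum_comm]
    exact sum_congr rfl fun _ _ => sum_congr rfl fun _ _ => by ring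
  simp only [expand]
  rw [integral_const_mul, integral_finsetSum _ fun p _ => hint p.1 p.2]

theorem integral_le_one_of_le_one {Ω : Type*} [MeasurableSpace Ω] {μ : Measure Ω}
    [IsProbabilityMeasure μ] {f : Ω → ℝ} (hf : Integrable f μ) (h : ∀ ω, f ω ≤ 1) :
    ∫ ω, f ω ∂μ ≤ 1 := by
  simpa using integral_mono hf (integrable_const 1) h

theorem mul_mul_le_one_of_zero_or_one {x y z : ℝ} (hx : x = 0 ∨ x = 1) (hy : y = 0 ∨ y = 1)
    (hz : z = 0 ∨ z = 1) : x * (y * z) ≤ 1 := by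
  rcases hx with rfl | rfl <;> rcases hy with rfl | rfl <;> rcases hz with rfl | rfl <;> norm_num

theorem stmt_4_general {Ω : Type*} [MeasureSpace Ω] [IsProbabilityMeasure (volume : Measure Ω)]
    (Xw Xv : ℕ → Ω → ℝ) (μw μv : ℝ)
    (h01w : ∀ i ω, Xw i ω = 0 ∨ Xw i ω = 1)
    (h01v : ∀ i ω, Xv i ω = 0 ∨ Xv i ω = 1)
    (hint : ∀ i l m : ℕ, Integrable (fun ω => Xw i ω * (Xv l ω * Xv m ω)))
    (hindep : ∀ i l m : ℕ, i ≠ l → l ≠ m → m ≠ i →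
      (∫ ω, Xw i ω * (Xv l ω * Xv m ω)) = μw * μv ^ 2)
    (i j k : ℕ) (hi : 1 ≤ i) (hij : i ≤ j) (hjk : j ≤ k) :
    (∫ ω, Xw i ω * (((1 / (j : ℝ)) * ∑ l ∈ Finset.Icc 1 j, Xv l ω) *
        ((1 / (k : ℝ)) * ∑ m ∈ Finset.Icc 1 k, Xv m ω))) ≤
      (((j : ℝ) * k - 2 * j - k + 2) * μw * μv ^ 2 + 2 * j + k - 2) / ((j : ℝ) * k) := by
  set pairs := Icc 1 j ×ˢ Icc 1 k
  set distinct : ℕ × ℕ → Prop := fun p => i ≠ p.1 ∧ p.1 ≠ p.2 ∧ p.2 ≠ i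
  have card_distinct : (#(pairs.filter distinct) : ℝ) = (j - 1) * (k - 2) := by
    simpa using cast_card_filter_product_pairwise_ne (R := ℝ) (mem_Icc.2 ⟨hi, hij⟩)
      (Icc_subset_Icc_right hjk)
  have card_rest : (#(pairs.filter (¬distinct ·)) : ℝ) = j * k - (j - 1) * (k - 2) := by
    rw [← card_distinct, eq_sub_iff_add_eq', ← Nat.cast_add,
      card_filter_add_card_filter_not, card_product]
    simp
  have sum_le := sum_le_card_filter_nsmul_add_card_filter_not_nsmul (s := pairs) distinct
    (fun p _ hp => hindep i p.1 p.2 hp.1 hp.2.1 hp.2.2)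
    (fun p _ _ => integral_le_one_of_le_one (hint i p.1 p.2)
      fun ω => mul_mul_le_one_of_zero_or_one (h01w i ω) (h01v p.1 ω) (h01v p.2 ω))
  have hj : (0 : ℝ) < j := by exact_mod_cast hi.trans hij
  have hk : (0 : ℝ) < k := hj.trans_le (by exact_mod_cast hjk)
  rw [integral_mul_scaled_sum_mul_scaled_sum _ _ _ _ _ _ (hint i)]
  calc 1 / (j : ℝ) * (1 / k) * ∑ p ∈ pairs, ∫ ω, Xw i ω * (Xv p.1 ω * Xv p.2 ω)
      ≤ 1 / (j : ℝ) * (1 / k) *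
          (#(pairs.filter distinct) • (μw * μv ^ 2) + #(pairs.filter (¬distinct ·)) • 1) := by
        gcongr
    _ = _ := by
        rw [nsmul_eq_mul, nsmul_eq_mul, card_distinct, card_rest]
        field_simp
        ring

/-- Upper bound on the triple moment `E[X_{i,w} Y_{j,v} Y_{k,v}]`. -/
theorem stmt_4 {Ω : Type*} [MeasureSpace Ω] [IsProbabilityMeasure (volume : Measure Ω)]
    (Xw Xv : ℕ → Ω → ℝ) (μw μv : ℝ)
    (h01w : ∀ i ω, Xw i ω = 0 ∨ Xw i ω = 1)
    (h01v : ∀ i ω, Xv i ω = 0 ∨ Xv i ω = 1)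
    (hmeanw : ∀ i, (∫ ω, Xw i ω) = μw)
    (hmeanv : ∀ i, (∫ ω, Xv i ω) = μv)
    (hint : ∀ i l m : ℕ, Integrable (fun ω => Xw i ω * (Xv l ω * Xv m ω)))
    (hindep : ∀ i l m : ℕ, i ≠ l → l ≠ m → m ≠ i →
      (∫ ω, Xw i ω * (Xv l ω * Xv m ω)) = μw * μv ^ 2)
    (i j k : ℕ) (hi : 1 ≤ i) (hij : i ≤ j) (hjk : j ≤ k) :
    (∫ ω, Xw i ω * (((1 / (j : ℝ)) * ∑ l ∈ Finset.Icc 1 j, Xv l ω) *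
        ((1 / (k : ℝ)) * ∑ m ∈ Finset.Icc 1 k, Xv m ω))) ≤
      (((j : ℝ) * k - 2 * j - k + 2) * μw * μv ^ 2 + 2 * j + k - 2) / ((j : ℝ) * k) :=
  stmt_4_general Xw Xv μw μv h01w h01v hint hindep i j k hi hij hjk
end

section
/- Under the same hypotheses as the upper bound lemma ( {0,1}-valued random variables with triple-wise independence for pairwise distinct indices, means μ_w, μ_v ), for i ≤ j ≤ k one has the lower bound E[X_{i,w} · Y_{j,v} · Y_{k,v}] ≥ ((jk − 2j − k + 2)·μ_w·μ_v²)/(jk). -/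
open MeasureTheory Finset

/-!
Expanding both averages, `X_{i,w} Y_{j,v} Y_{k,v}` is `1/(jk)` times the sum of
`X_{i,w} X_{l,v} X_{m,v}` over `l ≤ j`, `m ≤ k`. Every term is nonnegative, and the
`(j - 1)(k - 2) = jk - 2j - k + 2` terms with `i, l, m` pairwise distinct have mean
exactly `μ_w μ_v²`; dropping the others gives the bound.
-/

theorem integral_mul_sum_mul_sum {Ω ι : Type*} [MeasurableSpace Ω] {μ : Measure Ω}
    (f : Ω → ℝ) (g h : ι → Ω → ℝ) (s t : Finset ι)
    (hint : ∀ l ∈ s, ∀ m ∈ t, Integrable (fun ω => f ω * (g l ω * h m ω)) μ) :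
    ∫ ω, f ω * ((∑ l ∈ s, g l ω) * (∑ m ∈ t, h m ω)) ∂μ =
      ∑ l ∈ s, ∑ m ∈ t, ∫ ω, f ω * (g l ω * h m ω) ∂μ := by
  simp_rw [sum_mul_sum, mul_sum]
  rw [integral_finsetSum _ fun l hl => integrable_finsetSum _ fun m hm => hint l hl m hm]
  exact sum_congr rfl fun l hl => integral_finsetSum _ fun m hm => hint l hl m hm

theorem card_sub_one_mul_card_sub_two_mul_le_sum_sum {ι : Type*} [DecidableEq ι]
    {s t : Finset ι} {i : ι} (hst : s ⊆ t) (hi : i ∈ s) {a : ι → ι → ℝ} {c : ℝ}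
    (ha : ∀ l ∈ s, ∀ m ∈ t, 0 ≤ a l m) (hc : ∀ l m, l ≠ i → m ≠ i → m ≠ l → a l m = c) :
    ((#s : ℝ) - 1) * ((#t : ℝ) - 2) * c ≤ ∑ l ∈ s, ∑ m ∈ t, a l m := by
  have hcard_s : (#(s.erase i) : ℝ) = #s - 1 := by
    rw [← card_erase_add_one hi]; push_cast; ring
  have hcard_t : ∀ l ∈ s.erase i, (#((t.erase i).erase l) : ℝ) = #t - 2 := by
    intro l hl
    obtain ⟨hli, hls⟩ := mem_erase.1 hl
    have h₁ := card_erase_add_one (hst hi)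
    have h₂ := card_erase_add_one (mem_erase.2 ⟨hli, hst hls⟩)
    rw [← h₁, ← h₂]; push_cast; ring
  calc ((#s : ℝ) - 1) * ((#t : ℝ) - 2) * c
      = ∑ l ∈ s.erase i, ∑ m ∈ (t.erase i).erase l, c := by
        simp only [sum_const, nsmul_eq_mul]
        rw [sum_congr rfl fun l hl => by rw [hcard_t l hl], sum_const, nsmul_eq_mul, hcard_s]
        ring
    _ = ∑ l ∈ s.erase i, ∑ m ∈ (t.erase i).erase l, a l m := by
        refine sum_congr rfl fun l hl => sum_congr rfl fun m hm => (hc l m ?_ ?_ ?_).symm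
        · exact ne_of_mem_erase hl
        · exact ne_of_mem_erase (mem_of_mem_erase hm)
        · exact ne_of_mem_erase hm
    _ ≤ ∑ l ∈ s.erase i, ∑ m ∈ t, a l m := by
        refine sum_le_sum fun l hl => sum_le_sum_of_subset_of_nonneg
          (erase_subset _ _ |>.trans (erase_subset _ _)) fun m hm _ => ?_
        exact ha l (mem_of_mem_erase hl) m hm
    _ ≤ ∑ l ∈ s, ∑ m ∈ t, a l m :=
        sum_le_sum_of_subset_of_nonneg (erase_subset _ _) fun l hl _ =>
          sum_nonneg fun m hm => ha l hl m hm

theorem stmt_5_general {Ω : Type*} [MeasureSpace Ω] [IsProbabilityMeasure (volume : Measure Ω)]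
    (Xw Xv : ℕ → Ω → ℝ) (μw μv : ℝ)
    (h01w : ∀ i ω, Xw i ω = 0 ∨ Xw i ω = 1)
    (h01v : ∀ i ω, Xv i ω = 0 ∨ Xv i ω = 1)
    (hint : ∀ i l m : ℕ, Integrable (fun ω => Xw i ω * (Xv l ω * Xv m ω)))
    (hindep : ∀ i l m : ℕ, i ≠ l → l ≠ m → m ≠ i →
      (∫ ω, Xw i ω * (Xv l ω * Xv m ω)) = μw * μv ^ 2)
    (i j k : ℕ) (hi : 1 ≤ i) (hij : i ≤ j) (hjk : j ≤ k) :
    (∫ ω, Xw i ω * (((1 / (j : ℝ)) * ∑ l ∈ Finset.Icc 1 j, Xv l ω) *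
        ((1 / (k : ℝ)) * ∑ m ∈ Finset.Icc 1 k, Xv m ω))) ≥
      (((j : ℝ) * k - 2 * j - k + 2) * μw * μv ^ 2) / ((j : ℝ) * k) := by
  have hj : (0 : ℝ) < j := by exact_mod_cast hi.trans hij
  have hk : (0 : ℝ) < k := by exact_mod_cast (hi.trans hij).trans hjk
  have hXw : ∀ l ω, 0 ≤ Xw l ω := fun l ω => (h01w l ω).elim Eq.ge fun h => h ▸ zero_le_one
  have hXv : ∀ l ω, 0 ≤ Xv l ω := fun l ω => (h01v l ω).elim Eq.ge fun h => h ▸ zero_le_one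
  have hnonneg : ∀ l m, 0 ≤ ∫ ω, Xw i ω * (Xv l ω * Xv m ω) := fun l m =>
    integral_nonneg fun ω => mul_nonneg (hXw i ω) (mul_nonneg (hXv l ω) (hXv m ω))
  have hexpand : (∫ ω, Xw i ω * (((1 / (j : ℝ)) * ∑ l ∈ Icc 1 j, Xv l ω) *
        ((1 / (k : ℝ)) * ∑ m ∈ Icc 1 k, Xv m ω))) =
      1 / (j * k) * ∑ l ∈ Icc 1 j, ∑ m ∈ Icc 1 k, ∫ ω, Xw i ω * (Xv l ω * Xv m ω) := by
    have hpull : ∀ ω, Xw i ω * (((1 / (j : ℝ)) * ∑ l ∈ Icc 1 j, Xv l ω) *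
        ((1 / (k : ℝ)) * ∑ m ∈ Icc 1 k, Xv m ω)) =
        1 / (j * k) * (Xw i ω * ((∑ l ∈ Icc 1 j, Xv l ω) * ∑ m ∈ Icc 1 k, Xv m ω)) :=
      fun ω => by ring
    simp_rw [hpull, integral_const_mul]
    rw [integral_mul_sum_mul_sum _ _ _ _ _ fun l _ m _ => hint i l m]
  have hbound := card_sub_one_mul_card_sub_two_mul_le_sum_sum
    (Icc_subset_Icc_right hjk) (mem_Icc.2 ⟨hi, hij⟩) (fun l _ m _ => hnonneg l m)
    fun l m hli hmi hml => hindep i l m (Ne.symm hli) (Ne.symm hml) hmi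
  simp only [Nat.card_Icc, add_tsub_cancel_right] at hbound
  rw [hexpand, ge_iff_le, div_le_iff₀ (by positivity), one_div_mul_eq_div,
    div_mul_cancel₀ _ (by positivity)]
  linarith

/-- Lower bound on the triple moment `E[X_{i,w} Y_{j,v} Y_{k,v}]`. -/
theorem stmt_5 {Ω : Type*} [MeasureSpace Ω] [IsProbabilityMeasure (volume : Measure Ω)]
    (Xw Xv : ℕ → Ω → ℝ) (μw μv : ℝ)
    (h01w : ∀ i ω, Xw i ω = 0 ∨ Xw i ω = 1)
    (h01v : ∀ i ω, Xv i ω = 0 ∨ Xv i ω = 1)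
    (hmeanw : ∀ i, (∫ ω, Xw i ω) = μw)
    (hmeanv : ∀ i, (∫ ω, Xv i ω) = μv)
    (hint : ∀ i l m : ℕ, Integrable (fun ω => Xw i ω * (Xv l ω * Xv m ω)))
    (hindep : ∀ i l m : ℕ, i ≠ l → l ≠ m → m ≠ i →
      (∫ ω, Xw i ω * (Xv l ω * Xv m ω)) = μw * μv ^ 2)
    (i j k : ℕ) (hi : 1 ≤ i) (hij : i ≤ j) (hjk : j ≤ k) :
    (∫ ω, Xw i ω * (((1 / (j : ℝ)) * ∑ l ∈ Finset.Icc 1 j, Xv l ω) *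
        ((1 / (k : ℝ)) * ∑ m ∈ Finset.Icc 1 k, Xv m ω))) ≥
      (((j : ℝ) * k - 2 * j - k + 2) * μw * μv ^ 2) / ((j : ℝ) * k) :=
  stmt_5_general Xw Xv μw μv h01w h01v hint hindep i j k hi hij hjk
end

section
/- With the hypotheses of the triple-moment bounds ({0,1}-valued, triple-wise independence for distinct indices, means μ_w, μ_v), for all 1 ≤ i ≤ n: E[X_{i,w}·(Y_{i,v} − Y_{n,v})²] ≤ (2μ_wμ_v² − 2)/i² + (−μ_wμ_v² − (4/n)μ_wμ_v² + 3)/i + (2μ_wμ_v² − 2)/n² + (μ_wμ_v² + 3)/n. -/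
open MeasureTheory Finset

/-! Expanding the square, `E[X (Yᵢ - Yₙ)²] = E[X Yᵢ²] - 2 E[X Yᵢ Yₙ] + E[X Yₙ²]`, and
`E[X_{i,w} Yⱼ Yₖ]` is `1/(jk)` times the sum of the triple moments `E[X_{i,w} X_{l,v} X_{m,v}]`
over `l ≤ j`, `m ≤ k`. For `i ≤ j ≤ k`, exactly `(j - 1)(k - 2)` of these `jk` moments have
`i, l, m` pairwise distinct and equal `μ_w μ_v²`; the others lie in `[0, 1]`. Bounding them by `1`
in the two squares and by `0` in the cross term gives exactly the stated bound. -/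

namespace Finset

variable {ι : Type*} [DecidableEq ι] {T : ι → ι → ℝ} {a : ℝ} {i : ι} {P Q : Finset ι}

theorem sum_row_eq_of_pairwise_ne (hTa : ∀ l m, i ≠ l → l ≠ m → m ≠ i → T l m = a)
    {l : ι} (hl : l ∈ Q) (hi : i ∈ Q) (hli : l ≠ i) :
    ∑ m ∈ Q, T l m = T l i + T l l + (#Q - 2) * a := by
  have hl' : l ∈ Q.erase i := mem_erase.2 ⟨hli, hl⟩
  have hcard : #((Q.erase i).erase l) + 2 = #Q := by
    rw [← card_erase_add_one hi, ← card_erase_add_one hl']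
  rw [← add_sum_erase Q _ hi, ← add_sum_erase _ _ hl',
    sum_congr rfl fun m hm => hTa l m (Ne.symm hli) (ne_of_mem_erase hm).symm
      (ne_of_mem_erase (mem_of_mem_erase hm)),
    sum_const, nsmul_eq_mul, ← hcard]
  push_cast
  ring

theorem sum_sum_le_of_pairwise_ne (hPQ : P ⊆ Q) (hi : i ∈ P) (hT1 : ∀ l m, T l m ≤ 1)
    (hTa : ∀ l m, i ≠ l → l ≠ m → m ≠ i → T l m = a) :
    ∑ l ∈ P, ∑ m ∈ Q, T l m ≤ #Q + (#P - 1) * (2 + (#Q - 2) * a) := by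
  have hrow_i : ∑ m ∈ Q, T i m ≤ #Q := by
    simpa using sum_le_sum fun m (_ : m ∈ Q) => hT1 i m
  have hrows : ∑ l ∈ P.erase i, ∑ m ∈ Q, T l m ≤ ∑ l ∈ P.erase i, (2 + (#Q - 2) * a) := by
    refine sum_le_sum fun l hl => ?_
    rw [sum_row_eq_of_pairwise_ne hTa (hPQ (mem_of_mem_erase hl)) (hPQ hi) (ne_of_mem_erase hl)]
    linarith [hT1 l i, hT1 l l]
  rw [← add_sum_erase P _ hi]
  rw [sum_const, nsmul_eq_mul, cast_card_erase_of_mem hi] at hrows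
  linarith

theorem le_sum_sum_of_pairwise_ne (hPQ : P ⊆ Q) (hi : i ∈ P) (hT0 : ∀ l m, 0 ≤ T l m)
    (hTa : ∀ l m, i ≠ l → l ≠ m → m ≠ i → T l m = a) :
    (#P - 1) * ((#Q - 2) * a) ≤ ∑ l ∈ P, ∑ m ∈ Q, T l m := by
  have hrow_i : 0 ≤ ∑ m ∈ Q, T i m := sum_nonneg fun m _ => hT0 i m
  have hrows : ∑ l ∈ P.erase i, (#Q - 2) * a ≤ ∑ l ∈ P.erase i, ∑ m ∈ Q, T l m := by
    refine sum_le_sum fun l hl => ?_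
    rw [sum_row_eq_of_pairwise_ne hTa (hPQ (mem_of_mem_erase hl)) (hPQ hi) (ne_of_mem_erase hl)]
    linarith [hT0 l i, hT0 l l]
  rw [← add_sum_erase P _ hi]
  rw [sum_const, nsmul_eq_mul, cast_card_erase_of_mem hi] at hrows
  linarith

end Finset

section RunningMean

variable {Ω : Type*} {Xw Xv Y : ℕ → Ω → ℝ}

theorem mul_mean_mul_mean_eq (hY : ∀ j ω, Y j ω = (1 / (j : ℝ)) * ∑ l ∈ Icc 1 j, Xv l ω)
    (i j k : ℕ) :
    (fun ω => Xw i ω * (Y j ω * Y k ω)) = fun ω => 1 / (j : ℝ) * (1 / k) *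
      ∑ l ∈ Icc 1 j, ∑ m ∈ Icc 1 k, Xw i ω * (Xv l ω * Xv m ω) := by
  ext ω
  rw [hY, hY]
  simp_rw [← mul_sum, ← sum_mul]
  ring

variable [MeasureSpace Ω]

theorem integral_mul_mul_mem_Icc [IsProbabilityMeasure (volume : Measure Ω)]
    (h01w : ∀ i ω, Xw i ω = 0 ∨ Xw i ω = 1) (h01v : ∀ i ω, Xv i ω = 0 ∨ Xv i ω = 1)
    (hint : ∀ i l m : ℕ, Integrable (fun ω => Xw i ω * (Xv l ω * Xv m ω))) (i l m : ℕ) :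
    (∫ ω, Xw i ω * (Xv l ω * Xv m ω)) ∈ Set.Icc (0 : ℝ) 1 := by
  have hmem : ∀ ω, Xw i ω * (Xv l ω * Xv m ω) ∈ Set.Icc (0 : ℝ) 1 := fun ω => by
    rcases h01w i ω with h | h <;> rcases h01v l ω with h' | h' <;>
      rcases h01v m ω with h'' | h'' <;> simp [h, h', h'']
  refine ⟨integral_nonneg fun ω => (hmem ω).1, ?_⟩
  simpa using integral_mono (hint i l m) (integrable_const 1) fun ω => (hmem ω).2

theorem integrable_mul_mean_mul_mean
    (hY : ∀ j ω, Y j ω = (1 / (j : ℝ)) * ∑ l ∈ Icc 1 j, Xv l ω)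
    (hint : ∀ i l m : ℕ, Integrable (fun ω => Xw i ω * (Xv l ω * Xv m ω))) (i j k : ℕ) :
    Integrable (fun ω => Xw i ω * (Y j ω * Y k ω)) := by
  rw [mul_mean_mul_mean_eq hY]
  exact (integrable_finsetSum _ fun l _ => integrable_finsetSum _ fun m _ => hint i l m).const_mul _

theorem integral_mul_mean_mul_mean
    (hY : ∀ j ω, Y j ω = (1 / (j : ℝ)) * ∑ l ∈ Icc 1 j, Xv l ω)
    (hint : ∀ i l m : ℕ, Integrable (fun ω => Xw i ω * (Xv l ω * Xv m ω))) (i j k : ℕ) :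
    ∫ ω, Xw i ω * (Y j ω * Y k ω) = 1 / (j : ℝ) * (1 / k) *
      ∑ l ∈ Icc 1 j, ∑ m ∈ Icc 1 k, ∫ ω, Xw i ω * (Xv l ω * Xv m ω) := by
  rw [mul_mean_mul_mean_eq hY, integral_const_mul,
    integral_finsetSum _ fun l _ => integrable_finsetSum _ fun m _ => hint i l m]
  simp only [integral_finsetSum _ fun m _ => hint i _ m]

theorem integral_mul_mean_mul_mean_le
    (hY : ∀ j ω, Y j ω = (1 / (j : ℝ)) * ∑ l ∈ Icc 1 j, Xv l ω)
    (hint : ∀ i l m : ℕ, Integrable (fun ω => Xw i ω * (Xv l ω * Xv m ω))) {a : ℝ} {i j k : ℕ}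
    (hle : ∀ l m, (∫ ω, Xw i ω * (Xv l ω * Xv m ω)) ≤ 1)
    (hindep : ∀ l m : ℕ, i ≠ l → l ≠ m → m ≠ i → (∫ ω, Xw i ω * (Xv l ω * Xv m ω)) = a)
    (hi : 1 ≤ i) (hij : i ≤ j) (hjk : j ≤ k) :
    ∫ ω, Xw i ω * (Y j ω * Y k ω) ≤ 1 / (j : ℝ) * (1 / k) * (k + (j - 1) * (2 + (k - 2) * a)) := by
  rw [integral_mul_mean_mul_mean hY hint]
  refine mul_le_mul_of_nonneg_left ?_ (by positivity)
  simpa using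
    sum_sum_le_of_pairwise_ne (Icc_subset_Icc le_rfl hjk) (mem_Icc.2 ⟨hi, hij⟩) hle hindep

theorem le_integral_mul_mean_mul_mean
    (hY : ∀ j ω, Y j ω = (1 / (j : ℝ)) * ∑ l ∈ Icc 1 j, Xv l ω)
    (hint : ∀ i l m : ℕ, Integrable (fun ω => Xw i ω * (Xv l ω * Xv m ω))) {a : ℝ} {i j k : ℕ}
    (hnonneg : ∀ l m, 0 ≤ ∫ ω, Xw i ω * (Xv l ω * Xv m ω))
    (hindep : ∀ l m : ℕ, i ≠ l → l ≠ m → m ≠ i → (∫ ω, Xw i ω * (Xv l ω * Xv m ω)) = a)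
    (hi : 1 ≤ i) (hij : i ≤ j) (hjk : j ≤ k) :
    1 / (j : ℝ) * (1 / k) * ((j - 1) * ((k - 2) * a)) ≤ ∫ ω, Xw i ω * (Y j ω * Y k ω) := by
  rw [integral_mul_mean_mul_mean hY hint]
  refine mul_le_mul_of_nonneg_left ?_ (by positivity)
  simpa using
    le_sum_sum_of_pairwise_ne (Icc_subset_Icc le_rfl hjk) (mem_Icc.2 ⟨hi, hij⟩) hnonneg hindep

end RunningMean

theorem stmt_12_general {Ω : Type*} [MeasureSpace Ω] [IsProbabilityMeasure (volume : Measure Ω)]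
    (Xw Xv : ℕ → Ω → ℝ) (μw μv : ℝ)
    (h01w : ∀ i ω, Xw i ω = 0 ∨ Xw i ω = 1)
    (h01v : ∀ i ω, Xv i ω = 0 ∨ Xv i ω = 1)
    (hint : ∀ i l m : ℕ, Integrable (fun ω => Xw i ω * (Xv l ω * Xv m ω)))
    (hindep : ∀ i l m : ℕ, i ≠ l → l ≠ m → m ≠ i →
      (∫ ω, Xw i ω * (Xv l ω * Xv m ω)) = μw * μv ^ 2)
    (Y : ℕ → Ω → ℝ) (hY : ∀ j ω, Y j ω = (1 / (j : ℝ)) * ∑ l ∈ Finset.Icc 1 j, Xv l ω)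
    (i n : ℕ) (hi : 1 ≤ i) (hin : i ≤ n) :
    (∫ ω, Xw i ω * (Y i ω - Y n ω) ^ 2) ≤
      (2 * μw * μv ^ 2 - 2) / (i : ℝ) ^ 2 +
      (-(μw * μv ^ 2) - (4 / (n : ℝ)) * μw * μv ^ 2 + 3) / (i : ℝ) +
      (2 * μw * μv ^ 2 - 2) / (n : ℝ) ^ 2 + (μw * μv ^ 2 + 3) / (n : ℝ) := by
  have hint2 := integrable_mul_mean_mul_mean hY hint i
  have hexpand : (fun ω => Xw i ω * (Y i ω - Y n ω) ^ 2) = fun ω =>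
      Xw i ω * (Y i ω * Y i ω) - 2 * (Xw i ω * (Y i ω * Y n ω)) + Xw i ω * (Y n ω * Y n ω) := by
    ext ω; ring
  rw [hexpand, integral_add, integral_sub, integral_const_mul]
  rotate_left
  · exact hint2 i i
  · exact (hint2 i n).const_mul 2
  · exact (hint2 i i).sub ((hint2 i n).const_mul 2)
  · exact hint2 n n
  have hmem := integral_mul_mul_mem_Icc h01w h01v hint i
  have hii := integral_mul_mean_mul_mean_le hY hint (fun l m => (hmem l m).2) (hindep i) hi
    le_rfl le_rfl
  have hcross := le_integral_mul_mean_mul_mean hY hint (fun l m => (hmem l m).1) (hindep i) hi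
    le_rfl hin
  have hnn := integral_mul_mean_mul_mean_le hY hint (fun l m => (hmem l m).2) (hindep i) hi
    hin le_rfl
  have hi0 : (0 : ℝ) < i := by exact_mod_cast hi
  have hn0 : (0 : ℝ) < n := by exact_mod_cast hi.trans hin
  refine (add_le_add (sub_le_sub hii (mul_le_mul_of_nonneg_left hcross zero_le_two)) hnn).trans
    (le_of_eq ?_)
  field_simp
  ring

theorem stmt_12 {Ω : Type*} [MeasureSpace Ω] [IsProbabilityMeasure (volume : Measure Ω)]
    (Xw Xv : ℕ → Ω → ℝ) (μw μv : ℝ)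
    (h01w : ∀ i ω, Xw i ω = 0 ∨ Xw i ω = 1)
    (h01v : ∀ i ω, Xv i ω = 0 ∨ Xv i ω = 1)
    (hμw : μw ∈ Set.Icc (0 : ℝ) 1) (hμv : μv ∈ Set.Icc (0 : ℝ) 1)
    (hmeanw : ∀ i, (∫ ω, Xw i ω) = μw)
    (hmeanv : ∀ i, (∫ ω, Xv i ω) = μv)
    (hint : ∀ i l m : ℕ, Integrable (fun ω => Xw i ω * (Xv l ω * Xv m ω)))
    (hindep : ∀ i l m : ℕ, i ≠ l → l ≠ m → m ≠ i →
      (∫ ω, Xw i ω * (Xv l ω * Xv m ω)) = μw * μv ^ 2)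
    (Y : ℕ → Ω → ℝ) (hY : ∀ j ω, Y j ω = (1 / (j : ℝ)) * ∑ l ∈ Finset.Icc 1 j, Xv l ω)
    (i n : ℕ) (hi : 1 ≤ i) (hin : i ≤ n) :
    (∫ ω, Xw i ω * (Y i ω - Y n ω) ^ 2) ≤
      (2 * μw * μv ^ 2 - 2) / (i : ℝ) ^ 2 +
      (-(μw * μv ^ 2) - (4 / (n : ℝ)) * μw * μv ^ 2 + 3) / (i : ℝ) +
      (2 * μw * μv ^ 2 - 2) / (n : ℝ) ^ 2 + (μw * μv ^ 2 + 3) / (n : ℝ) :=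
  stmt_12_general Xw Xv μw μv h01w h01v hint hindep Y hY i n hi hin
end
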